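/- Let (a',b) be a digraphic list of n pairs and let (a,b) be a list with a nonincreasing, Σa_i = Σa'_i, and a ≺ a'. Then (a,b) is a digraphic list. -/
import Mathlib


open Finset

/-- Partial sum of the first `k` entries of `a`. -/
def partSum {n : ℕ} (a : Fin n → ℕ) (k : ℕ) : ℕ :=
  ∑ i : Fin n, if (i : ℕ) < k then a i else 0

/-- `a ≺ a'` : `a` is majorized by `a'`. -/
def Majorized {n : ℕ} (a a' : Fin n → ℕ) : Prop :=
  (∀ k : ℕ, partSum a k ≤ partSum a' k) ∧ ∑ i, a i = ∑ i, a' i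

/-- `a` is nonincreasing. -/
def Nonincreasing {n : ℕ} (a : Fin n → ℕ) : Prop :=
  ∀ i j : Fin n, i ≤ j → a j ≤ a i

/-- `b` is nondecreasing. -/
def Nondecreasing {n : ℕ} (b : Fin n → ℕ) : Prop :=
  ∀ i j : Fin n, i ≤ j → b i ≤ b j

/-- `a` is obtained from `a'` by a unit `(i,j)`-transfer. -/
def UnitTransfer {n : ℕ} (a' a : Fin n → ℕ) (i j : Fin n) : Prop :=
  i < j ∧ a' j + 2 ≤ a' i ∧
  a = Function.update (Function.update a' i (a' i - 1)) j (a' j + 1)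

/-- Row sum of a 0-1 matrix. -/
def rowSum {n : ℕ} (M : Fin n → Fin n → Bool) (i : Fin n) : ℕ :=
  ∑ j, if M i j then 1 else 0

/-- Column sum of a 0-1 matrix. -/
def colSum {n : ℕ} (M : Fin n → Fin n → Bool) (j : Fin n) : ℕ :=
  ∑ i, if M i j then 1 else 0

/-- Number of loop-digraph realizations of `(a,b)`:
`n×n` 0-1 matrices with row sums `b` and column sums `a`. -/
noncomputable def N1 {n : ℕ} (a b : Fin n → ℕ) : ℕ :=
  Nat.card {M : Fin n → Fin n → Bool //
    (∀ i, rowSum M i = b i) ∧ (∀ j, colSum M j = a j)}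

def LoopDigraphic {n : ℕ} (a b : Fin n → ℕ) : Prop := 0 < N1 a b

/-- Number of digraph realizations of `(a,b)`:
`n×n` 0-1 matrices with zero diagonal, row sums `b` and column sums `a`. -/
noncomputable def N2 {n : ℕ} (a b : Fin n → ℕ) : ℕ :=
  Nat.card {M : Fin n → Fin n → Bool //
    (∀ i, M i i = false) ∧ (∀ i, rowSum M i = b i) ∧ (∀ j, colSum M j = a j)}

def Digraphic {n : ℕ} (a b : Fin n → ℕ) : Prop := 0 < N2 a b

/-- Number of simple graph realizations of `a` (symmetric 0-1 adjacency matrices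
with zero diagonal and degrees `a`). -/
noncomputable def N3 {n : ℕ} (a : Fin n → ℕ) : ℕ :=
  Nat.card {M : Fin n → Fin n → Bool //
    (∀ i j, M i j = M j i) ∧ (∀ i, M i i = false) ∧ (∀ i, rowSum M i = a i)}

def Graphic {n : ℕ} (a : Fin n → ℕ) : Prop := 0 < N3 a

/-- The minconvex list for parameters `n, m`. -/
def minconvex (n m : ℕ) : Fin n → ℕ :=
  fun i => if (i : ℕ) < m % n then m / n + 1 else m / n

/-- `(a,b)` is lexicographically nonincreasing. -/
def LexNonincreasing {n : ℕ} (a b : Fin n → ℕ) : Prop :=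
  ∀ i j : Fin n, i ≤ j → (a j < a i ∨ (a i = a j ∧ b j ≤ b i))


lemma partSum_zero {n : ℕ} (a : Fin n → ℕ) : partSum a 0 = 0 := by simp [partSum]

lemma partSum_succ {n : ℕ} (a : Fin n → ℕ) {k : ℕ} (hk : k < n) :
    partSum a (k+1) = partSum a k + a ⟨k, hk⟩ := by
  unfold partSum
  have : ∀ i : Fin n, (if (i : ℕ) < k+1 then a i else 0)
      = (if (i : ℕ) < k then a i else 0) + (if i = ⟨k, hk⟩ then a i else 0) := by
    intro i
    rcases lt_trichotomy (i : ℕ) k with h | h | h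
    · simp [h, Nat.lt_succ_of_lt h, Fin.ext_iff, h.ne]
    · simp [h, Fin.ext_iff, Nat.lt_irrefl]
    · have h2 : i ≠ ⟨k, hk⟩ := by
        intro he; rw [he] at h; simp at h
      rw [if_neg (by omega : ¬ (i:ℕ) < k + 1), if_neg (by omega : ¬ (i:ℕ) < k), if_neg h2]
  rw [Finset.sum_congr rfl (fun i _ => this i), Finset.sum_add_distrib,
    Finset.sum_ite_eq' univ (⟨k, hk⟩ : Fin n) a]
  simp

lemma partSum_of_le {n : ℕ} (a : Fin n → ℕ) {k : ℕ} (hk : n ≤ k) :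
    partSum a k = ∑ i, a i := by
  unfold partSum
  exact Finset.sum_congr rfl (fun i _ => if_pos (lt_of_lt_of_le i.isLt hk))

lemma sum_pair_split {n : ℕ} {i j : Fin n} (hij : i ≠ j) (f : Fin n → ℕ) :
    ∑ x, f x = f i + f j + ∑ x ∈ (univ.erase i).erase j, f x := by
  rw [← Finset.add_sum_erase univ f (mem_univ i), ← Finset.add_sum_erase _ f
    (Finset.mem_erase.2 ⟨hij.symm, mem_univ j⟩)]
  ring

lemma digraphic_iff {n : ℕ} (a b : Fin n → ℕ) :
    Digraphic a b ↔ ∃ M : Fin n → Fin n → Bool,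
      (∀ i, M i i = false) ∧ (∀ i, rowSum M i = b i) ∧ (∀ j, colSum M j = a j) := by
  rw [Digraphic, N2, Nat.card_pos_iff]
  constructor
  · rintro ⟨⟨M, hM⟩, -⟩; exact ⟨M, hM⟩
  · rintro ⟨M, hM⟩
    exact ⟨⟨⟨M, hM⟩⟩, inferInstance⟩

lemma transfer_digraphic {n : ℕ} (a' b : Fin n → ℕ) (i j : Fin n) (hij : i ≠ j)
    (hge : a' j + 2 ≤ a' i) (hd : Digraphic a' b) :
    Digraphic (Function.update (Function.update a' i (a' i - 1)) j (a' j + 1)) b := by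
  set a : Fin n → ℕ := Function.update (Function.update a' i (a' i - 1)) j (a' j + 1) with ha
  obtain ⟨M, hdiag, hrow, hcol⟩ := (digraphic_iff a' b).1 hd
  -- find a row r with M r i = true, M r j = false, r ≠ j
  have hScard : (univ.filter (fun r => M r i = true)).card = a' i := by
    rw [Finset.card_filter, ← hcol i, colSum]
  have hTcard : (insert j (univ.filter (fun r => M r j = true))).card ≤ a' j + 1 := by
    refine le_trans (Finset.card_insert_le _ _) ?_
    have : (univ.filter (fun r => M r j = true)).card = a' j := by
      rw [Finset.card_filter, ← hcol j, colSum]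
    omega
  have hex : ∃ r ∈ univ.filter (fun r => M r i = true),
      r ∉ insert j (univ.filter (fun r => M r j = true)) := by
    by_contra hc
    push_neg at hc
    have := Finset.card_le_card hc
    omega
  obtain ⟨r, hrS, hrT⟩ := hex
  have hri : M r i = true := (Finset.mem_filter.1 hrS).2
  have hrnej : r ≠ j := by
    intro h; subst h; exact hrT (Finset.mem_insert_self _ _)
  have hrj : M r j = false := by
    by_contra h
    have h2 : M r j = true := by simpa using h
    exact hrT (Finset.mem_insert_of_mem (Finset.mem_filter.2 ⟨mem_univ r, h2⟩))
  set M' : Fin n → Fin n → Bool := fun x y =>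
    if x = r ∧ y = i then false else if x = r ∧ y = j then true else M x y with hM'
  have hM'ri : M' r i = false := by simp [hM']
  have hM'rj : M' r j = true := by simp [hM', hij.symm]
  have hM'other : ∀ x y, ¬(x = r ∧ y = i) → ¬(x = r ∧ y = j) → M' x y = M x y := by
    intro x y h1 h2; simp only [hM', if_neg h1, if_neg h2]
  have hrnei : r ≠ i := by
    intro h; rw [h] at hri; rw [hdiag i] at hri; exact Bool.noConfusion hri
  refine (digraphic_iff a b).2 ⟨M', ?_, ?_, ?_⟩
  · intro x
    by_cases hx : x = r
    · subst hx
      rw [hM'other x x (fun h => hrnei (h.2 ▸ rfl)) (fun h => hrnej (h.2 ▸ rfl))]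
      exact hdiag x
    · rw [hM'other x x (fun h => hx h.1) (fun h => hx h.1)]
      exact hdiag x
  · intro x
    by_cases hx : x = r
    · subst hx
      rw [← hrow x, rowSum, rowSum, sum_pair_split hij (fun y => if M' x y then 1 else 0),
        sum_pair_split hij (fun y => if M x y then 1 else 0), hM'ri, hM'rj, hri, hrj]
      have : ∀ y ∈ (univ.erase i).erase j, (if M' x y then 1 else 0) = (if M x y then 1 else 0) := by
        intro y hy
        rw [hM'other x y (fun h => (Finset.mem_erase.1 (Finset.mem_erase.1 hy).2).1 h.2)
          (fun h => (Finset.mem_erase.1 hy).1 h.2)]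
      rw [Finset.sum_congr rfl this]
      simp
    · rw [← hrow x, rowSum, rowSum]
      refine Finset.sum_congr rfl (fun y _ => ?_)
      rw [hM'other x y (fun h => hx h.1) (fun h => hx h.1)]
  · intro c
    by_cases hci : c = i
    · subst hci
      have hkey : colSum M' c + 1 = colSum M c := by
        rw [colSum, colSum, ← Finset.add_sum_erase univ (fun x => if M' x c then 1 else 0) (mem_univ r),
          ← Finset.add_sum_erase univ (fun x => if M x c then 1 else 0) (mem_univ r), hM'ri, hri]
        have : ∀ x ∈ univ.erase r, (if M' x c then 1 else 0) = (if M x c then 1 else 0) := by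
          intro x hx
          rw [hM'other x c (fun h => (Finset.mem_erase.1 hx).1 h.1) (fun h => hij h.2)]
        rw [Finset.sum_congr rfl this]
        simp [Nat.add_comm]
      have hac : a c = a' c - 1 := by
        rw [ha, Function.update_of_ne hij, Function.update_self]
      rw [hac, ← hcol c]
      omega
    · by_cases hcj : c = j
      · subst hcj
        have hkey : colSum M' c = colSum M c + 1 := by
          rw [colSum, colSum, ← Finset.add_sum_erase univ (fun x => if M' x c then 1 else 0) (mem_univ r),
            ← Finset.add_sum_erase univ (fun x => if M x c then 1 else 0) (mem_univ r), hM'rj, hrj]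
          have : ∀ x ∈ univ.erase r, (if M' x c then 1 else 0) = (if M x c then 1 else 0) := by
            intro x hx
            rw [hM'other x c (fun h => hij h.2.symm) (fun h => (Finset.mem_erase.1 hx).1 h.1)]
          rw [Finset.sum_congr rfl this]
          simp [Nat.add_comm]
        have hac : a c = a' c + 1 := by rw [ha, Function.update_self]
        rw [hac, ← hcol c, hkey]
      · have hac : a c = a' c := by
          rw [ha, Function.update_of_ne hcj, Function.update_of_ne hci]
        rw [hac, ← hcol c, colSum, colSum]
        refine Finset.sum_congr rfl (fun x _ => ?_)
        rw [hM'other x c (fun h => hci h.2) (fun h => hcj h.2)]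

lemma partSum_congr' {n : ℕ} (a a' : Fin n → ℕ) (k : ℕ)
    (h : ∀ t : Fin n, (t : ℕ) < k → a t = a' t) : partSum a k = partSum a' k := by
  refine Finset.sum_congr rfl (fun t _ => ?_)
  by_cases ht : (t : ℕ) < k
  · rw [if_pos ht, if_pos ht, h t ht]
  · rw [if_neg ht, if_neg ht]

lemma key {n : ℕ} (b : Fin n → ℕ) (m : ℕ) :
    ∀ a a' : Fin n → ℕ,
      (∑ k ∈ Finset.range (n+1), (partSum a' k - partSum a k)) ≤ m →
      Digraphic a' b → Nonincreasing a → Majorized a a' → Digraphic a b := by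
  classical
  induction m with
  | zero =>
    intro a a' hm hd _ hmaj
    have heq : a = a' := by
      have hz : ∀ k ∈ Finset.range (n+1), partSum a' k - partSum a k = 0 :=
        Finset.sum_eq_zero_iff.1 (Nat.le_zero.1 hm)
      have hps : ∀ k ≤ n, partSum a k = partSum a' k := by
        intro k hk
        have := hz k (Finset.mem_range.2 (by omega))
        have := hmaj.1 k
        omega
      funext t
      have h1 := hps t.1 (le_of_lt t.isLt)
      have h2 := hps (t.1+1) t.isLt
      rw [partSum_succ a t.isLt, partSum_succ a' t.isLt] at h2
      simp only [Fin.eta] at h2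
      omega
    rwa [heq]
  | succ m ih =>
    intro a a' hm hd hmono hmaj
    by_cases hae : a = a'
    · rwa [hae]
    -- least index where a and a' differ
    have hexi : ∃ t : ℕ, ∃ ht : t < n, a ⟨t, ht⟩ ≠ a' ⟨t, ht⟩ := by
      by_contra hc
      push_neg at hc
      exact hae (funext fun t => by simpa using hc t.1 t.isLt)
    obtain ⟨i0, hi0n, hi0ne, hlt_i⟩ :
        ∃ i0 : ℕ, ∃ h : i0 < n, a ⟨i0, h⟩ ≠ a' ⟨i0, h⟩ ∧
          ∀ t : Fin n, (t : ℕ) < i0 → a t = a' t := by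
      refine ⟨Nat.find hexi, ?_⟩
      obtain ⟨h1, h2⟩ := Nat.find_spec hexi
      refine ⟨h1, h2, fun t ht => ?_⟩
      have := Nat.find_min hexi ht
      push_neg at this
      simpa using this t.isLt
    have hprefix : partSum a i0 = partSum a' i0 := partSum_congr' a a' i0 hlt_i
    have haI : a ⟨i0, hi0n⟩ < a' ⟨i0, hi0n⟩ := by
      have h1 := hmaj.1 (i0+1)
      rw [partSum_succ a hi0n, partSum_succ a' hi0n] at h1
      omega
    -- least index after i0 where a' < a
    have hexj : ∃ t : ℕ, i0 < t ∧ ∃ ht : t < n, a' ⟨t, ht⟩ < a ⟨t, ht⟩ := by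
      by_contra hc
      push_neg at hc
      have hle : ∀ t : Fin n, a t ≤ a' t := by
        intro t
        rcases lt_trichotomy (t : ℕ) i0 with h | h | h
        · exact (hlt_i t h).le
        · have ht : t = ⟨i0, hi0n⟩ := Fin.ext h
          rw [ht]; exact haI.le
        · have := hc t.1 h
          simpa using this t.isLt
      have h5 : ∑ t, a t < ∑ t, a' t :=
        Finset.sum_lt_sum (fun t _ => hle t) ⟨⟨i0, hi0n⟩, mem_univ _, haI⟩
      have h6 := hmaj.2
      omega
    obtain ⟨j0, hij0, hj0n, hJlt, hmid⟩ :
        ∃ j0 : ℕ, i0 < j0 ∧ ∃ h : j0 < n, a' ⟨j0, h⟩ < a ⟨j0, h⟩ ∧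
          ∀ t : Fin n, i0 < (t : ℕ) → (t : ℕ) < j0 → a t ≤ a' t := by
      refine ⟨Nat.find hexj, ?_⟩
      obtain ⟨h1, h2, h3⟩ := Nat.find_spec hexj
      refine ⟨h1, h2, h3, fun t ht1 ht2 => ?_⟩
      have := Nat.find_min hexj ht2
      push_neg at this
      simpa using this ht1 t.isLt
    set I : Fin n := ⟨i0, hi0n⟩ with hIdef
    set J : Fin n := ⟨j0, hj0n⟩ with hJdef
    -- strict inequality of partial sums between i0 and j0
    have hstrict : ∀ k : ℕ, i0 < k → k ≤ j0 → partSum a k < partSum a' k := by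
      intro k
      induction k with
      | zero => omega
      | succ k ihk =>
        intro h1 h2
        have hkn : k < n := by omega
        rw [partSum_succ a hkn, partSum_succ a' hkn]
        rcases Nat.lt_or_ge i0 k with h | h
        · have hh1 := ihk h (by omega)
          have hklt : k < j0 := by omega
          have hh2 := hmid ⟨k, hkn⟩ h hklt
          omega
        · have hki : k = i0 := by omega
          have hIk : (⟨k, hkn⟩ : Fin n) = I := Fin.ext hki
          rw [hIk, hki]
          omega
    -- the unit transfer
    have hIJ : I ≠ J := by
      intro h
      have : i0 = j0 := congrArg Fin.val h
      omega
    have haJ : a' J < a J := hJlt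
    have haJI : a J ≤ a I := hmono I J (by simp [hIdef, hJdef, Fin.mk_le_mk]; omega)
    have hge : a' J + 2 ≤ a' I := by omega
    set a'' : Fin n → ℕ := Function.update (Function.update a' I (a' I - 1)) J (a' J + 1)
      with ha''
    have hd'' : Digraphic a'' b := transfer_digraphic a' b I J hIJ hge hd
    have ha''I : a'' I = a' I - 1 := by
      rw [ha'', Function.update_of_ne hIJ, Function.update_self]
    have ha''J : a'' J = a' J + 1 := by rw [ha'', Function.update_self]
    have ha''o : ∀ t : Fin n, t ≠ I → t ≠ J → a'' t = a' t := by
      intro t h1 h2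
      rw [ha'', Function.update_of_ne h2, Function.update_of_ne h1]
    have hclaim : ∀ k : ℕ, partSum a'' k + (if i0 < k then 1 else 0)
        = partSum a' k + (if j0 < k then 1 else 0) := by
      intro k
      unfold partSum
      rw [sum_pair_split hIJ (fun t => if (t : ℕ) < k then a'' t else 0),
        sum_pair_split hIJ (fun t => if (t : ℕ) < k then a' t else 0)]
      have hrest : ∑ t ∈ (univ.erase I).erase J, (if (t : ℕ) < k then a'' t else 0)
          = ∑ t ∈ (univ.erase I).erase J, (if (t : ℕ) < k then a' t else 0) := by
        refine Finset.sum_congr rfl (fun t ht => ?_)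
        rw [ha''o t (Finset.mem_erase.1 (Finset.mem_erase.1 ht).2).1 (Finset.mem_erase.1 ht).1]
      rw [hrest, ha''I, ha''J]
      have hIv : ((I : Fin n) : ℕ) = i0 := rfl
      have hJv : ((J : Fin n) : ℕ) = j0 := rfl
      rw [hIv, hJv]
      by_cases h1 : i0 < k <;> by_cases h2 : j0 < k <;>
        simp only [h1, h2, if_true, if_false] <;> omega
    have hsum'' : ∑ t, a'' t = ∑ t, a' t := by
      have hcl := hclaim (n+1)
      rw [partSum_of_le a'' (by omega), partSum_of_le a' (by omega),
        if_pos (by omega : i0 < n+1), if_pos (by omega : j0 < n+1)] at hcl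
      omega
    have hmaj'' : Majorized a a'' := by
      constructor
      · intro k
        have hc := hclaim k
        rcases Nat.lt_or_ge i0 k with h1 | h1
        · rcases Nat.lt_or_ge j0 k with h2 | h2
          · rw [if_pos h1, if_pos h2] at hc
            have := hmaj.1 k
            omega
          · rw [if_pos h1, if_neg (by omega)] at hc
            have := hstrict k h1 h2
            omega
        · rw [if_neg (by omega), if_neg (by omega)] at hc
          have := hmaj.1 k
          omega
      · rw [hsum'']
        exact hmaj.2
    have hmeas : (∑ k ∈ Finset.range (n+1), (partSum a'' k - partSum a k)) ≤ m := by
      have hstep : (∑ k ∈ Finset.range (n+1), (partSum a'' k - partSum a k))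
          < ∑ k ∈ Finset.range (n+1), (partSum a' k - partSum a k) := by
        refine Finset.sum_lt_sum (fun k _ => ?_) ⟨i0+1, Finset.mem_range.2 (by omega), ?_⟩
        · have hc := hclaim k
          have := hmaj.1 k
          by_cases h1 : i0 < k <;> by_cases h2 : j0 < k <;>
            simp only [h1, h2, if_true, if_false] at hc <;> omega
        · have hc := hclaim (i0+1)
          rw [if_pos (by omega), if_neg (by omega)] at hc
          have h3 := hstrict (i0+1) (by omega) (by omega)
          have h4 := hmaj''.1 (i0+1)
          omega
      omega
    exact ih a a'' hmeas hd'' hmono hmaj''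

theorem stmt3 {n : ℕ} (a a' b : Fin n → ℕ)
    (hd : Digraphic a' b) (hmono : Nonincreasing a)
    (hsum : ∑ i, a i = ∑ i, a' i) (hmaj : Majorized a a') :
    Digraphic a b :=
  key b _ a a' le_rfl hd hmono hmaj
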